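/- Let E be a finite-dimensional real inner product space, let f : E → ℝ be differentiable with gradient ∇f, and suppose ∇f is Lipschitz with constant L > 0. Let P : E → E be a self-adjoint positive semidefinite continuous linear operator with operator norm ‖P‖ ≤ 1/L. Then for every v ∈ E, f(v − P(∇f(v))) ≤ f(v) − (1/2)·⟨∇f(v), P(∇f(v))⟩. -/

import Mathlib

/-!
With `g = ∇f v`, the quadratic upper bound `f (v + u) ≤ f v + ⟪g, u⟫ + L/2 ‖u‖²` given by the
Lipschitz gradient, applied at `u = -P g`, reduces the claim to `L ‖P g‖² ≤ ⟪g, P g⟫`. This follows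
from `‖P g‖² ≤ ‖P‖ ⟪g, P g⟫`, a Cauchy–Schwarz inequality for the semi-inner product `⟪·, P ·⟫`.
-/

open RealInnerProductSpace

section

variable {E : Type*} [NormedAddCommGroup E] [InnerProductSpace ℝ E]

theorem ContinuousLinearMap.IsPositive.norm_apply_sq_le {T : E →L[ℝ] E} (hT : T.IsPositive)
    (x : E) : ‖T x‖ ^ 2 ≤ ‖T‖ * ⟪x, T x⟫ := by
  rcases (norm_nonneg T).eq_or_lt with hT0 | hTpos
  · simp [(ContinuousLinearMap.opNorm_zero_iff T).mp hT0.symm]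
  -- Evaluate the nonnegative form `⟪y, T y⟫` at `y = x - ‖T‖⁻¹ • T x`.
  set t := ‖T‖⁻¹
  have hsymm : ⟪x, T (T x)⟫ = ‖T x‖ ^ 2 := by
    rw [← hT.inner_left_eq_inner_right, real_inner_self_eq_norm_sq]
  have hexpand : ⟪x - t • T x, T (x - t • T x)⟫
      = ⟪x, T x⟫ - 2 * t * ‖T x‖ ^ 2 + t ^ 2 * ⟪T x, T (T x)⟫ := by
    simp only [map_sub, map_smul, inner_sub_left, inner_sub_right, real_inner_smul_left,
      real_inner_smul_right, hsymm, real_inner_self_eq_norm_sq]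
    ring
  have hquad : ⟪T x, T (T x)⟫ ≤ ‖T‖ * ‖T x‖ ^ 2 :=
    calc ⟪T x, T (T x)⟫ ≤ ‖T x‖ * ‖T (T x)‖ := real_inner_le_norm _ _
      _ ≤ ‖T x‖ * (‖T‖ * ‖T x‖) := by gcongr; exact T.le_opNorm _
      _ = ‖T‖ * ‖T x‖ ^ 2 := by ring
  have hnonneg := hT.inner_nonneg_right (x - t • T x)
  have ht : t * ‖T‖ = 1 := inv_mul_cancel₀ hTpos.ne'
  have hcancel : t ^ 2 * (‖T‖ * ‖T x‖ ^ 2) = t * ‖T x‖ ^ 2 := by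
    linear_combination t * ‖T x‖ ^ 2 * ht
  have hlin : 0 ≤ ⟪x, T x⟫ - t * ‖T x‖ ^ 2 := by
    nlinarith [mul_le_mul_of_nonneg_left hquad (sq_nonneg t)]
  nlinarith [mul_nonneg hTpos.le hlin]

theorem HasGradientAt.hasDerivAt_comp_add_smul [CompleteSpace E] {f : E → ℝ} {g x u : E}
    {t : ℝ} (hf : HasGradientAt f g (x + t • u)) :
    HasDerivAt (fun s : ℝ => f (x + s • u)) ⟪g, u⟫ t := by
  have hline : HasDerivAt (fun s : ℝ => x + s • u) u t := by
    simpa using ((hasDerivAt_id t).smul_const u).const_add x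
  simpa [Function.comp_def] using hf.hasFDerivAt.comp_hasDerivAt t hline

theorem LipschitzWith.inner_map_add_smul_sub_le {G : E → E} {K : NNReal}
    (hG : LipschitzWith K G) (x u : E) {t : ℝ} (ht : 0 ≤ t) :
    ⟪G (x + t • u) - G x, u⟫ ≤ K * t * ‖u‖ ^ 2 :=
  calc ⟪G (x + t • u) - G x, u⟫ ≤ ‖G (x + t • u) - G x‖ * ‖u‖ := real_inner_le_norm _ _
    _ ≤ K * ‖t • u‖ * ‖u‖ := by
        gcongr
        simpa [dist_eq_norm] using hG.dist_le_mul (x + t • u) x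
    _ = K * t * ‖u‖ ^ 2 := by rw [norm_smul, Real.norm_of_nonneg ht]; ring

theorem le_add_inner_gradient_add_of_lipschitzWith [CompleteSpace E] {f : E → ℝ}
    (hf : Differentiable ℝ f) {K : NNReal} (hK : LipschitzWith K (gradient f)) (x u : E) :
    f (x + u) ≤ f x + ⟪gradient f x, u⟫ + K / 2 * ‖u‖ ^ 2 := by
  have hline (t : ℝ) :
      HasDerivAt (fun s : ℝ => f (x + s • u)) ⟪gradient f (x + t • u), u⟫ t :=
    (hf _).hasGradientAt.hasDerivAt_comp_add_smul
  have hparabola (t : ℝ) :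
      HasDerivAt (fun s : ℝ => f x + s * ⟪gradient f x, u⟫ + K / 2 * ‖u‖ ^ 2 * s ^ 2)
        (⟪gradient f x, u⟫ + K * ‖u‖ ^ 2 * t) t := by
    refine (((hasDerivAt_mul_const _).const_add (f x)).add
      ((hasDerivAt_pow 2 t).const_mul (K / 2 * ‖u‖ ^ 2))).congr_deriv ?_
    push_cast
    ring
  have hslope (t : ℝ) (ht : 0 ≤ t) :
      ⟪gradient f (x + t • u), u⟫ ≤ ⟪gradient f x, u⟫ + K * ‖u‖ ^ 2 * t := by
    have := hK.inner_map_add_smul_sub_le x u ht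
    rw [inner_sub_left] at this
    linarith
  have hfence := image_le_of_deriv_right_le_deriv_boundary (a := 0) (b := 1)
    (fun t _ => (hline t).continuousAt.continuousWithinAt)
    (fun t _ => (hline t).hasDerivWithinAt) (by simp)
    (fun t _ => (hparabola t).continuousAt.continuousWithinAt)
    (fun t _ => (hparabola t).hasDerivWithinAt) (fun t ht => hslope t ht.1)
    (Set.right_mem_Icc.mpr zero_le_one)
  simpa using hfence

end

/-- Preconditioned descent lemma: if `f` has an `L`-Lipschitz gradient and `P` is a
self-adjoint positive semidefinite continuous linear operator with `‖P‖ ≤ 1/L`, then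
`f (v - P (∇f v)) ≤ f v - (1/2) ⟪∇f v, P (∇f v)⟫`. -/
theorem stmt0 {E : Type*} [NormedAddCommGroup E] [InnerProductSpace ℝ E]
    [FiniteDimensional ℝ E]
    (f : E → ℝ) (hf : Differentiable ℝ f)
    (L : ℝ) (hL : 0 < L)
    (hlip : LipschitzWith (Real.toNNReal L) (fun v => gradient f v))
    (P : E →L[ℝ] E)
    (hsa : ∀ u w : E, ⟪P u, w⟫ = ⟪u, P w⟫)
    (hpsd : ∀ u : E, 0 ≤ ⟪u, P u⟫)
    (hnorm : ‖P‖ ≤ 1 / L) :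
    ∀ v : E, f (v - P (gradient f v)) ≤ f v - (1 / 2) * ⟪gradient f v, P (gradient f v)⟫ := by
  intro v
  set g := gradient f v
  have hP : P.IsPositive :=
    ⟨hsa, fun u => by simpa [ContinuousLinearMap.reApplyInnerSelf, real_inner_comm] using hpsd u⟩
  have hLnorm : L * ‖P‖ ≤ 1 := by rwa [le_div_iff₀' hL] at hnorm
  have hPg : L * ‖P g‖ ^ 2 ≤ ⟪g, P g⟫ :=
    calc L * ‖P g‖ ^ 2 ≤ L * (‖P‖ * ⟪g, P g⟫) := by gcongr; exact hP.norm_apply_sq_le g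
      _ ≤ ⟪g, P g⟫ := by nlinarith [hpsd g]
  have hdescent := le_add_inner_gradient_add_of_lipschitzWith hf hlip v (-P g)
  rw [← sub_eq_add_neg, inner_neg_right, norm_neg, Real.coe_toNNReal L hL.le] at hdescent
  linarith
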